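/- Let S be a unital inverse semigroup acting on a locally compact Hausdorff space X by partial homeomorphisms α_t : D_{t*} → D_t between open subsets of X. The transformation groupoid X ⋊ S is Hausdorff if and only if for each t ∈ S the open set D_{1,t} := ⋃_{e ≤ 1, e ≤ t} D_e is relatively closed in D_t. -/

import Mathlib

/-- The natural order relation on an inverse semigroup:
`t ≤ u` iff `t = u * e` for some idempotent `e`. -/
def InvSgpLe {S : Type*} [Mul S] (t u : S) : Prop :=
  ∃ e : S, e * e = e ∧ t = u * e

/-- Pairs `(t, x)` with `x ∈ D_{t*}`, representing germs of an action of `S`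
on a space `X` with domains `D`; the arrow space of `X ⋊ S` is the quotient. -/
def PGermT (S : Type*) [Monoid S] (X : Type*) (star : S → S) (D : S → Set X) :=
  {p : S × X // p.2 ∈ D (star p.1)}

/-- `[t, x] = [t', x]` iff there is `v ≤ t, t'` with `x ∈ D_{v*}`. -/
def pGermRel (S : Type*) [Monoid S] (X : Type*) (star : S → S) (D : S → Set X) :
    PGermT S X star D → PGermT S X star D → Prop :=
  fun p q => p.1.2 = q.1.2 ∧
    ∃ v : S, InvSgpLe v p.1.1 ∧ InvSgpLe v q.1.1 ∧ p.1.2 ∈ D (star v)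

/-- The arrow space of the transformation groupoid `X ⋊ S`. -/
def PGermSp (S : Type*) [Monoid S] (X : Type*) (star : S → S) (D : S → Set X) :=
  Quot (pGermRel S X star D)

instance pGermTTop (S : Type*) [Monoid S] (X : Type*) [TopologicalSpace X]
    (star : S → S) (D : S → Set X) : TopologicalSpace (PGermT S X star D) := by
  letI : TopologicalSpace S := ⊥
  exact TopologicalSpace.induced Subtype.val inferInstance

/-- The quotient topology on `X ⋊ S`; it is the unique topology for which each
bisection `{[t, x] : x ∈ D_{t*}}` is open and homeomorphic to `D_{t*}` via
`[t, x] ↦ x`. -/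
instance pGermSpTop (S : Type*) [Monoid S] (X : Type*) [TopologicalSpace X]
    (star : S → S) (D : S → Set X) : TopologicalSpace (PGermSp S X star D) :=
  TopologicalSpace.coinduced (Quot.mk (pGermRel S X star D)) inferInstance

section Alg
variable {S : Type*} [Monoid S] (star : S → S)

lemma isg_sstar (huniq : ∀ t s : S, t * s * t = t → s * t * s = s → s = star t)
    (h1 : ∀ t : S, t * star t * t = t) (h2 : ∀ t : S, star t * t * star t = star t)
    (t : S) : star (star t) = t :=
  (huniq (star t) t (h2 t) (h1 t)).symm

lemma isg_star_idem (huniq : ∀ t s : S, t * s * t = t → s * t * s = s → s = star t)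
    {e : S} (he : e * e = e) : star e = e :=
  (huniq e e (by rw [he, he]) (by rw [he, he])).symm

variable (h1 : ∀ t : S, t * star t * t = t)
  (h2 : ∀ t : S, star t * t * star t = star t)
  (huniq : ∀ t s : S, t * s * t = t → s * t * s = s → s = star t)

include h1 h2 huniq

lemma isg_idem_mul {e f : S} (he : e * e = e) (hf : f * f = f) : (e * f) * (e * f) = e * f := by
  set x := star (e * f) with hx
  have heR : ∀ y : S, e * (e * y) = e * y := fun y => by rw [← mul_assoc, he]
  have hfR : ∀ y : S, f * (f * y) = f * y := fun y => by rw [← mul_assoc, hf]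
  have hA : e * (f * (x * (e * f))) = e * f := by
    have := h1 (e * f); simp only [mul_assoc] at this; simpa using this
  have hB : x * (e * (f * x)) = x := by
    have := h2 (e * f); simp only [mul_assoc] at this; simpa using this
  have hBg : ∀ y : S, x * (e * (f * (x * y))) = x * y := fun y => by
    calc x * (e * (f * (x * y))) = (x * (e * (f * x))) * y := by simp only [mul_assoc]
    _ = x * y := by rw [hB]
  have hg : f * x * e = x := by
    refine huniq (e * f) (f * x * e) ?_ ?_
    · calc (e * f) * (f * x * e) * (e * f) = e * (f * (f * (x * (e * (e * f))))) := by
            simp only [mul_assoc]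
        _ = e * f := by rw [hfR, heR, hA]
    · calc (f * x * e) * (e * f) * (f * x * e) = f * (x * (e * (e * (f * (f * (x * e)))))) := by
            simp only [mul_assoc]
        _ = f * (x * e) := by rw [heR, hfR, hBg]
        _ = f * x * e := by rw [mul_assoc]
  have hxx : x * x = x := by
    calc x * x = (f * x * e) * (f * x * e) := by rw [hg]
      _ = f * (x * (e * (f * (x * e)))) := by simp only [mul_assoc]
      _ = f * (x * e) := by rw [hBg]
      _ = x := by rw [← mul_assoc, hg]
  have : e * f = x :=
    calc e * f = star (star (e * f)) := (isg_sstar star huniq h1 h2 (e * f)).symm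
      _ = star x := rfl
      _ = x := isg_star_idem star huniq hxx
  rw [this, hxx]

lemma isg_idem_comm {e f : S} (he : e * e = e) (hf : f * f = f) : e * f = f * e := by
  have hef := isg_idem_mul star h1 h2 huniq he hf
  have hfe := isg_idem_mul star h1 h2 huniq hf he
  have heR : ∀ y : S, e * (e * y) = e * y := fun y => by rw [← mul_assoc, he]
  have hfR : ∀ y : S, f * (f * y) = f * y := fun y => by rw [← mul_assoc, hf]
  have h1' : f * e = star (e * f) := by
    refine huniq (e * f) (f * e) ?_ ?_
    · calc (e * f) * (f * e) * (e * f) = e * (f * (f * (e * (e * f)))) := by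
            simp only [mul_assoc]
      _ = e * (f * (e * f)) := by rw [hfR, heR]
      _ = (e * f) * (e * f) := by simp only [mul_assoc]
      _ = e * f := hef
    · calc (f * e) * (e * f) * (f * e) = f * (e * (e * (f * (f * e)))) := by
            simp only [mul_assoc]
      _ = f * (e * (f * e)) := by rw [heR, hfR]
      _ = (f * e) * (f * e) := by simp only [mul_assoc]
      _ = f * e := hfe
  rw [h1', isg_star_idem star huniq hef]

lemma isg_uustar (u : S) : (u * star u) * (u * star u) = u * star u := by
  rw [mul_assoc u (star u), ← mul_assoc (star u), h2]

lemma isg_staruu (u : S) : (star u * u) * (star u * u) = star u * u := by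
  rw [mul_assoc (star u) u, ← mul_assoc u, h1]

lemma isg_star_mul (t u : S) : star (t * u) = star u * star t := by
  have hc := isg_idem_comm star h1 h2 huniq (isg_uustar star h1 h2 huniq u)
    (isg_staruu star h1 h2 huniq t)
  refine (huniq (t * u) (star u * star t) ?_ ?_).symm
  · calc (t * u) * (star u * star t) * (t * u)
        = t * ((u * star u) * (star t * t)) * u := by simp only [mul_assoc]
      _ = t * ((star t * t) * (u * star u)) * u := by rw [hc]
      _ = (t * star t * t) * (u * star u * u) := by simp only [mul_assoc]
      _ = t * u := by rw [h1, h1]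
  · calc (star u * star t) * (t * u) * (star u * star t)
        = star u * ((star t * t) * (u * star u)) * star t := by simp only [mul_assoc]
      _ = star u * ((u * star u) * (star t * t)) * star t := by rw [← hc]
      _ = (star u * u * star u) * (star t * t * star t) := by simp only [mul_assoc]
      _ = star u * star t := by rw [h2, h2]

lemma isg_conj_idem {e : S} (he : e * e = e) (u : S) :
    (star u * e * u) * (star u * e * u) = star u * e * u := by
  have hc := isg_idem_comm star h1 h2 huniq he (isg_uustar star h1 h2 huniq u)
  calc (star u * e * u) * (star u * e * u)
      = star u * (e * (u * star u)) * (e * u) := by simp only [mul_assoc]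
    _ = star u * ((u * star u) * e) * (e * u) := by rw [hc]
    _ = (star u * u * star u) * (e * (e * u)) := by simp only [mul_assoc]
    _ = star u * (e * (e * u)) := by rw [h2]
    _ = star u * (e * u) := by rw [← mul_assoc e e, he]
    _ = star u * e * u := by rw [mul_assoc]

lemma isg_mul_le {v t : S} (hv : InvSgpLe v t) (u : S) : InvSgpLe (v * u) (t * u) := by
  obtain ⟨e, he, hveq⟩ := hv
  refine ⟨star u * e * u, isg_conj_idem star h1 h2 huniq he u, ?_⟩
  have hc := isg_idem_comm star h1 h2 huniq he (isg_uustar star h1 h2 huniq u)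
  calc v * u = (t * e) * u := by rw [hveq]
    _ = t * (e * (u * star u)) * u := by
        have hu : u * (star u * u) = u := by rw [← mul_assoc, h1]
        simp only [mul_assoc, hu]
    _ = t * ((u * star u) * e) * u := by rw [hc]
    _ = (t * u) * (star u * e * u) := by simp only [mul_assoc]

lemma isg_idem_le_star {e t : S} (he : e * e = e) (hle : InvSgpLe e t) :
    InvSgpLe e (star t) := by
  obtain ⟨f, hf, heq⟩ := hle
  have hfR : ∀ y : S, f * (f * y) = f * y := fun y => by rw [← mul_assoc, hf]
  have hc := isg_idem_comm star h1 h2 huniq hf (isg_staruu star h1 h2 huniq t)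
  refine ⟨t * f * star t, ?_, ?_⟩
  · calc (t * f * star t) * (t * f * star t)
        = t * (f * (star t * t)) * (f * star t) := by simp only [mul_assoc]
      _ = t * ((star t * t) * f) * (f * star t) := by rw [hc]
      _ = (t * star t * t) * (f * (f * star t)) := by simp only [mul_assoc]
      _ = t * (f * (f * star t)) := by rw [h1]
      _ = t * (f * star t) := by rw [hfR]
      _ = t * f * star t := by rw [mul_assoc]
  · have hstare : e = f * star t := by
      calc e = star e := (isg_star_idem star huniq he).symm
        _ = star (t * f) := by rw [heq]
        _ = star f * star t := isg_star_mul star h1 h2 huniq t f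
        _ = f * star t := by rw [isg_star_idem star huniq hf]
    calc e = f * star t := hstare
      _ = f * (star t * t * star t) := by rw [h2]
      _ = (f * (star t * t)) * star t := by simp only [mul_assoc]
      _ = ((star t * t) * f) * star t := by rw [← hc]
      _ = star t * (t * f * star t) := by simp only [mul_assoc]

lemma isg_idem_le_iff {e t : S} (he : e * e = e) :
    InvSgpLe e t ↔ InvSgpLe e (star t) := by
  constructor
  · exact isg_idem_le_star star h1 h2 huniq he
  · intro h
    have := isg_idem_le_star star h1 h2 huniq he h
    rwa [isg_sstar star huniq h1 h2] at this

end Alg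

section Ord
variable {S : Type*} [Monoid S] (star : S → S)

lemma isg_le_refl (h1 : ∀ t : S, t * star t * t = t)
    (h2 : ∀ t : S, star t * t * star t = star t) (t : S) : InvSgpLe t t := by
  refine ⟨star t * t, ?_, by rw [← mul_assoc, h1]⟩
  rw [mul_assoc (star t) t, ← mul_assoc t, h1]

lemma isg_le_one {e : S} (he : e * e = e) : InvSgpLe e 1 := ⟨e, he, (one_mul e).symm⟩

lemma isg_idem_of_le_one {e : S} (h : InvSgpLe e 1) : e * e = e := by
  obtain ⟨f, hf, he⟩ := h
  rw [one_mul] at he; rw [he]; exact hf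

lemma isg_le_trans (h1 : ∀ t : S, t * star t * t = t)
    (h2 : ∀ t : S, star t * t * star t = star t)
    (huniq : ∀ t s : S, t * s * t = t → s * t * s = s → s = star t)
    {a b c : S} (hab : InvSgpLe a b) (hbc : InvSgpLe b c) : InvSgpLe a c := by
  obtain ⟨e, he, hae⟩ := hab
  obtain ⟨f, hf, hbf⟩ := hbc
  refine ⟨f * e, ?_, by rw [hae, hbf, mul_assoc]⟩
  calc (f * e) * (f * e) = f * (e * f) * e := by simp only [mul_assoc]
    _ = f * (f * e) * e := by rw [isg_idem_comm star h1 h2 huniq he hf]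
    _ = (f * f) * (e * e) := by simp only [mul_assoc]
    _ = f * e := by rw [he, hf]

end Ord

section Germ
variable {S : Type*} [Monoid S] (star : S → S) {X : Type*} [TopologicalSpace X]
  (D : S → Set X) (α : S → X → X)

/-- slices of open sets in `PGermT`. -/
lemma xg_isOpen_T_iff (hDopen : ∀ t : S, IsOpen (D t)) (A : Set (PGermT S X star D)) :
    IsOpen A ↔ ∀ t : S,
      IsOpen {x : X | ∃ h : x ∈ D (star t), (⟨(t, x), h⟩ : PGermT S X star D) ∈ A} := by
  letI : TopologicalSpace S := ⊥
  haveI : DiscreteTopology S := ⟨rfl⟩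
  have hinst : pGermTTop S X star D =
      TopologicalSpace.induced (Subtype.val : PGermT S X star D → S × X) (instTopologicalSpaceProd) := rfl
  refine (@isOpen_induced_iff (PGermT S X star D) (S × X) instTopologicalSpaceProd A Subtype.val).trans ?_
  constructor
  · rintro ⟨B, hB, rfl⟩ t
    have hset : {x : X | ∃ h : x ∈ D (star t),
        (⟨(t, x), h⟩ : PGermT S X star D) ∈ Subtype.val ⁻¹' B}
        = D (star t) ∩ (fun x : X => ((t, x) : S × X)) ⁻¹' B := by
      ext x; exact ⟨fun ⟨h, hb⟩ => ⟨h, hb⟩, fun ⟨h, hb⟩ => ⟨h, hb⟩⟩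
    refine (congrArg IsOpen hset).mpr ?_
    exact (hDopen _).inter (hB.preimage (Continuous.prodMk_right t))
  · intro h
    refine ⟨⋃ t : S, {t} ×ˢ {x : X | ∃ h : x ∈ D (star t),
      (⟨(t, x), h⟩ : PGermT S X star D) ∈ A}, isOpen_iUnion fun t =>
        (isOpen_discrete _).prod (h t), ?_⟩
    ext ⟨⟨u, y⟩, hy⟩
    show ((u, y) : S × X) ∈ ⋃ t : S, {t} ×ˢ {x : X | ∃ h : x ∈ D (star t),
      (⟨(t, x), h⟩ : PGermT S X star D) ∈ A} ↔ (⟨(u, y), hy⟩ : PGermT S X star D) ∈ A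
    simp only [Set.mem_preimage, Set.mem_iUnion, Set.mem_prod, Set.mem_singleton_iff,
      Set.mem_setOf_eq]
    constructor
    · rintro ⟨t, rfl, _, hA⟩; exact hA
    · intro hA; exact ⟨u, rfl, hy, hA⟩

lemma xg_isOpen_iff (hDopen : ∀ t : S, IsOpen (D t)) (U : Set (PGermSp S X star D)) :
    IsOpen U ↔ ∀ t : S, IsOpen {x : X | ∃ h : x ∈ D (star t),
      Quot.mk (pGermRel S X star D) ⟨(t, x), h⟩ ∈ U} :=
  isOpen_coinduced.trans (xg_isOpen_T_iff star D hDopen _)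

variable (h1 : ∀ t : S, t * star t * t = t)
  (h2 : ∀ t : S, star t * t * star t = star t)
  (huniq : ∀ t s : S, t * s * t = t → s * t * s = s → s = star t)
  (hinv : ∀ t : S, ∀ x ∈ D (star t), α (star t) (α t x) = x)
  (hcomp : ∀ t u : S, ∀ x ∈ D (star (t * u)), α t (α u x) = α (t * u) x)
  (hdom : ∀ t u : S, D (star (t * u)) = {x ∈ D (star u) | α u x ∈ D (star t)})

include huniq hinv hcomp in
lemma xg_alpha_idem {e : S} (he : e * e = e) {x : X} (hx : x ∈ D (star e)) : α e x = x := by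
  have ha := hinv e x hx
  rw [isg_star_idem star huniq he] at ha
  have hb := hcomp e e x (by rw [he]; exact hx)
  rw [he] at hb
  rw [← hb, ha]

include huniq hinv hcomp hdom in
lemma xg_D_mono {v t : S} (hv : InvSgpLe v t) : D (star v) ⊆ D (star t) := by
  obtain ⟨e, he, rfl⟩ := hv
  intro x hx
  rw [hdom t e] at hx
  obtain ⟨hx1, hx2⟩ := hx
  rwa [xg_alpha_idem star D α huniq hinv hcomp he hx1] at hx2

include h1 h2 huniq hinv hcomp hdom in
lemma xg_equiv : Equivalence (pGermRel S X star D) := by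
  constructor
  · rintro ⟨⟨t, x⟩, hx⟩
    exact ⟨rfl, t, isg_le_refl star h1 h2 t, isg_le_refl star h1 h2 t, hx⟩
  · rintro ⟨⟨t, x⟩, hx⟩ ⟨⟨u, y⟩, hy⟩ ⟨hxy, v, hvt, hvu, hv⟩
    exact ⟨hxy.symm, v, hvu, hvt, hxy ▸ hv⟩
  · rintro ⟨⟨t, x⟩, hx⟩ ⟨⟨u, y⟩, hy⟩ ⟨⟨w, z⟩, hz⟩ ⟨hxy, v1, hv1t, hv1u, hm1⟩
      ⟨hyz, v2, hv2u, hv2w, hm2⟩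
    dsimp only at *
    subst hxy
    obtain ⟨e1, he1, hv1⟩ := hv1u
    obtain ⟨e2, he2, hv2⟩ := hv2u
    refine ⟨hyz, v1 * e2, ?_, ?_, ?_⟩
    · exact isg_le_trans star h1 h2 huniq ⟨e2, he2, rfl⟩ hv1t
    · have : v1 * e2 = v2 * e1 := by
        rw [hv1, hv2, mul_assoc, mul_assoc, isg_idem_comm star h1 h2 huniq he1 he2]
      rw [this]
      exact isg_le_trans star h1 h2 huniq ⟨e1, he1, rfl⟩ hv2w
    · rw [hdom v1 e2]
      have hxe2 : x ∈ D (star e2) := by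
        rw [hv2, hdom u e2] at hm2; exact hm2.1
      exact ⟨hxe2, by
        rwa [xg_alpha_idem star D α huniq hinv hcomp he2 hxe2]⟩

include h1 h2 huniq hinv hcomp hdom in
lemma xg_mk_eq {p q : PGermT S X star D} :
    Quot.mk (pGermRel S X star D) p = Quot.mk (pGermRel S X star D) q ↔
      pGermRel S X star D p q :=
  Quot.eq.trans ((xg_equiv star D α h1 h2 huniq hinv hcomp hdom).eqvGen_iff)

include h1 h2 huniq hinv hcomp hdom in
lemma xg_isOpen_bisection (hDopen : ∀ t : S, IsOpen (D t)) (t : S) (V : Set X)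
    (hV : IsOpen V) (hVD : V ⊆ D (star t)) :
    IsOpen (Quot.mk (pGermRel S X star D) ''
      {p : PGermT S X star D | p.1.1 = t ∧ p.1.2 ∈ V}) := by
  refine (xg_isOpen_iff star D hDopen _).mpr ?_
  intro u
  have hset : {x : X | ∃ h : x ∈ D (star u), Quot.mk (pGermRel S X star D) ⟨(u, x), h⟩ ∈
      Quot.mk (pGermRel S X star D) '' {p : PGermT S X star D | p.1.1 = t ∧ p.1.2 ∈ V}}
      = ⋃ v ∈ {v : S | InvSgpLe v t ∧ InvSgpLe v u}, (V ∩ D (star v)) := by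
    ext x
    simp only [Set.mem_setOf_eq, Set.mem_iUnion, Set.mem_inter_iff, Set.mem_image]
    constructor
    · rintro ⟨h, ⟨p, ⟨hp1, hp2⟩, heq⟩⟩
      replace heq := (xg_mk_eq star D α h1 h2 huniq hinv hcomp hdom).mp heq
      obtain ⟨hpx, v, hvp, hvu, hm⟩ := heq
      have hpx' : p.1.2 = x := hpx
      exact ⟨v, ⟨hp1 ▸ hvp, hvu⟩, hpx' ▸ hp2, hpx' ▸ hm⟩
    · rintro ⟨v, ⟨hvt, hvu⟩, hxV, hxv⟩
      have hxu : x ∈ D (star u) := xg_D_mono star D α huniq hinv hcomp hdom hvu hxv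
      refine ⟨hxu, ⟨⟨(t, x), hVD hxV⟩, ⟨rfl, hxV⟩, ?_⟩⟩
      exact Quot.sound ⟨rfl, v, hvt, hvu, hxv⟩
  refine (congrArg IsOpen hset).mpr ?_
  exact isOpen_biUnion fun v _ => hV.inter (hDopen _)

end Germ

/-- For an action of a unital inverse semigroup `S` on a locally compact
Hausdorff space `X` by partial homeomorphisms `α_t : D_{t*} → D_t`, the
transformation groupoid `X ⋊ S` is Hausdorff iff for each `t` the open set
`D_{1,t} = ⋃_{e ≤ 1, e ≤ t} D_e` is relatively closed in `D_t`. -/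
theorem stmt17 {S : Type*} [Monoid S] (star : S → S)
    (h1 : ∀ t : S, t * star t * t = t)
    (h2 : ∀ t : S, star t * t * star t = star t)
    (huniq : ∀ t s : S, t * s * t = t → s * t * s = s → s = star t)
    {X : Type*} [TopologicalSpace X] [T2Space X] [LocallyCompactSpace X]
    (D : S → Set X) (α : S → X → X)
    (hDopen : ∀ t : S, IsOpen (D t)) (hD1 : D 1 = Set.univ)
    (hα1 : ∀ x : X, α 1 x = x)
    (hmaps : ∀ t : S, Set.MapsTo (α t) (D (star t)) (D t))
    (hcont : ∀ t : S, ContinuousOn (α t) (D (star t)))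
    (hinv : ∀ t : S, ∀ x ∈ D (star t), α (star t) (α t x) = x)
    (hcomp : ∀ t u : S, ∀ x ∈ D (star (t * u)), α t (α u x) = α (t * u) x)
    (hdom : ∀ t u : S, D (star (t * u)) = {x ∈ D (star u) | α u x ∈ D (star t)}) :
    T2Space (PGermSp S X star D) ↔
    ∀ t : S, ∃ C : Set X, IsClosed C ∧
      (⋃ e ∈ {e : S | InvSgpLe e 1 ∧ InvSgpLe e t}, D e) = D t ∩ C := by
  have hmk : ∀ {p q : PGermT S X star D},
      Quot.mk (pGermRel S X star D) p = Quot.mk (pGermRel S X star D) q ↔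
        pGermRel S X star D p q :=
    fun {p q} => xg_mk_eq star D α h1 h2 huniq hinv hcomp hdom
  have hDe : ∀ {e : S}, e * e = e → D e = D (star e) := fun {e} he => by
    rw [isg_star_idem star huniq he]
  have hEsub : ∀ t : S, (⋃ e ∈ {e : S | InvSgpLe e 1 ∧ InvSgpLe e t}, D e) ⊆ D t := by
    intro t x hx
    simp only [Set.mem_iUnion, Set.mem_setOf_eq] at hx
    obtain ⟨e, ⟨he1, het⟩, hxe⟩ := hx
    have he := isg_idem_of_le_one he1
    have hes : InvSgpLe e (star t) := (isg_idem_le_iff star h1 h2 huniq he).mp het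
    have hsub : D (star e) ⊆ D (star (star t)) :=
      xg_D_mono star D α huniq hinv hcomp hdom hes
    rw [isg_sstar star huniq h1 h2] at hsub
    exact hsub (by rwa [← hDe he])
  constructor
  · -- Hausdorff implies relatively closed
    intro hT2 t
    haveI hT2' : T2Space (Quot (pGermRel S X star D)) := hT2
    refine ⟨closure (⋃ e ∈ {e : S | InvSgpLe e 1 ∧ InvSgpLe e t}, D e), isClosed_closure, ?_⟩
    apply Set.Subset.antisymm
    · exact Set.subset_inter (hEsub t) subset_closure
    · rintro x ⟨hxD, hxc⟩
      by_contra hxe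
      have hxst : x ∈ D (star (star t)) := by rwa [isg_sstar star huniq h1 h2]
      have hstar1 : star (1 : S) = 1 := isg_star_idem star huniq (mul_one 1)
      have hx1 : x ∈ D (star (1 : S)) := by rw [hstar1, hD1]; exact Set.mem_univ x
      have hab : (Quot.mk (pGermRel S X star D) ⟨(star t, x), hxst⟩ : PGermSp S X star D) ≠
          Quot.mk (pGermRel S X star D) ⟨((1 : S), x), hx1⟩ := by
        intro h
        replace h := hmk.mp h
        obtain ⟨-, v, hvst, hv1, hm⟩ := h
        have hv := isg_idem_of_le_one hv1
        have hvt : InvSgpLe v t := (isg_idem_le_iff star h1 h2 huniq hv).mpr hvst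
        apply hxe
        simp only [Set.mem_iUnion, Set.mem_setOf_eq]
        exact ⟨v, ⟨hv1, hvt⟩, by rwa [hDe hv]⟩
      obtain ⟨U, V, hU, hV, haU, hbV, hUV⟩ := t2_separation hab
      replace hU := (xg_isOpen_iff star D hDopen U).mp hU
      replace hV := (xg_isOpen_iff star D hDopen V).mp hV
      have hUsl := hU (star t)
      have hVsl := hV 1
      have hne := mem_closure_iff.mp hxc _ (hUsl.inter hVsl)
        ⟨⟨hxst, haU⟩, ⟨hx1, hbV⟩⟩
      obtain ⟨y, ⟨⟨hyst, hyU⟩, ⟨hy1, hyV⟩⟩, hyE⟩ := hne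
      simp only [Set.mem_iUnion, Set.mem_setOf_eq] at hyE
      obtain ⟨e, ⟨he1, het⟩, hye⟩ := hyE
      have he := isg_idem_of_le_one he1
      have heq : Quot.mk (pGermRel S X star D) ⟨(star t, y), hyst⟩ =
          Quot.mk (pGermRel S X star D) ⟨((1 : S), y), hy1⟩ :=
        Quot.sound ⟨rfl, e, (isg_idem_le_iff star h1 h2 huniq he).mp het, he1,
          by rwa [← hDe he]⟩
      exact Set.disjoint_left.mp hUV (heq ▸ hyU) hyV
  · -- relatively closed implies Hausdorff
    intro hcl
    constructor
    intro a b hab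
    obtain ⟨⟨⟨t, x⟩, hxt⟩, rfl⟩ := Quot.exists_rep a
    obtain ⟨⟨⟨u, x'⟩, hx'u⟩, rfl⟩ := Quot.exists_rep b
    by_cases hxx : x = x'
    · subst hxx
      -- same base point
      have hyD : α u x ∈ D (star (t * star u)) := by
        rw [hdom t (star u)]
        refine ⟨?_, ?_⟩
        · rw [isg_sstar star huniq h1 h2]; exact hmaps u hx'u
        · rw [hinv u x hx'u]; exact hxt
      obtain ⟨C, hC, hCE⟩ := hcl (star (t * star u))
      have hyU : α u x ∉
          (⋃ e ∈ {e : S | InvSgpLe e 1 ∧ InvSgpLe e (star (t * star u))}, D e) := by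
        intro hyU
        simp only [Set.mem_iUnion, Set.mem_setOf_eq] at hyU
        obtain ⟨e, ⟨he1, hes⟩, hye⟩ := hyU
        have he := isg_idem_of_le_one he1
        have hesS : InvSgpLe e (t * star u) :=
          (isg_idem_le_iff star h1 h2 huniq he).mpr hes
        have h1le : InvSgpLe (e * u) ((t * star u) * u) :=
          isg_mul_le star h1 h2 huniq hesS u
        have h2le : InvSgpLe ((t * star u) * u) t :=
          ⟨star u * u, isg_staruu star h1 h2 huniq u, by rw [mul_assoc]⟩
        have hvt : InvSgpLe (e * u) t := isg_le_trans star h1 h2 huniq h1le h2le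
        have hvu : InvSgpLe (e * u) u := by
          refine ⟨star u * e * u, isg_conj_idem star h1 h2 huniq he u, ?_⟩
          have hc := isg_idem_comm star h1 h2 huniq he (isg_uustar star h1 h2 huniq u)
          calc e * u = e * (u * star u * u) := by rw [h1]
            _ = (e * (u * star u)) * u := by simp only [mul_assoc]
            _ = ((u * star u) * e) * u := by rw [hc]
            _ = u * (star u * e * u) := by simp only [mul_assoc]
        have hxv : x ∈ D (star (e * u)) := by
          rw [hdom e u]
          exact ⟨hx'u, by rwa [hDe he] at hye⟩
        exact hab (Quot.sound ⟨rfl, e * u, hvt, hvu, hxv⟩)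
      have hyC : α u x ∉ C := fun hyC => hyU (by rw [hCE]; exact ⟨hyD, hyC⟩)
      have hWopen : IsOpen (D (star (t * star u)) \ C) := (hDopen _).sdiff hC
      have hVopen : IsOpen (D (star t) ∩ (D (star u) ∩ α u ⁻¹' (D (star (t * star u)) \ C))) :=
        (hDopen _).inter ((hcont u).isOpen_inter_preimage (hDopen _) hWopen)
      have hxV : x ∈ D (star t) ∩ (D (star u) ∩ α u ⁻¹' (D (star (t * star u)) \ C)) :=
        ⟨hxt, hx'u, ⟨hyD, hyC⟩⟩
      refine ⟨Quot.mk (pGermRel S X star D) '' {p : PGermT S X star D | p.1.1 = t ∧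
          p.1.2 ∈ D (star t) ∩ (D (star u) ∩ α u ⁻¹' (D (star (t * star u)) \ C))},
        Quot.mk (pGermRel S X star D) '' {p : PGermT S X star D | p.1.1 = u ∧
          p.1.2 ∈ D (star t) ∩ (D (star u) ∩ α u ⁻¹' (D (star (t * star u)) \ C))},
        xg_isOpen_bisection star D α h1 h2 huniq hinv hcomp hdom hDopen t _ hVopen
          (fun z hz => hz.1),
        xg_isOpen_bisection star D α h1 h2 huniq hinv hcomp hdom hDopen u _ hVopen
          (fun z hz => hz.2.1),
        ⟨⟨(t, x), hxt⟩, ⟨rfl, hxV⟩, rfl⟩,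
        ⟨⟨(u, x), hx'u⟩, ⟨rfl, hxV⟩, rfl⟩, ?_⟩
      rw [Set.disjoint_left]
      rintro c ⟨p, ⟨hp1, hp2⟩, hpe⟩ ⟨q, ⟨hq1, hq2⟩, hqe⟩
      rw [← hqe] at hpe
      replace hpe := hmk.mp hpe
      obtain ⟨hz, v, hvp, hvq, hm⟩ := hpe
      rw [hp1] at hvp
      rw [hq1] at hvq
      obtain ⟨f, hf, hveq⟩ := hvq
      have hwle : InvSgpLe (v * star u) (t * star u) :=
        isg_mul_le star h1 h2 huniq hvp (star u)
      have hwid : (v * star u) * (v * star u) = v * star u := by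
        rw [hveq]
        have hconj := isg_conj_idem star h1 h2 huniq hf (star u)
        rwa [isg_sstar star huniq h1 h2] at hconj
      have hzu : p.1.2 ∈ D (star u) := hp2.2.1
      have hαm : α u p.1.2 ∈ D (star (v * star u)) := by
        rw [hdom v (star u)]
        refine ⟨?_, ?_⟩
        · rw [isg_sstar star huniq h1 h2]; exact hmaps u hzu
        · rw [hinv u _ hzu]; exact hm
      have hmem : α u p.1.2 ∈
          (⋃ e ∈ {e : S | InvSgpLe e 1 ∧ InvSgpLe e (star (t * star u))}, D e) := by
        simp only [Set.mem_iUnion, Set.mem_setOf_eq]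
        exact ⟨v * star u, ⟨isg_le_one hwid,
          (isg_idem_le_iff star h1 h2 huniq hwid).mp hwle⟩, by rwa [hDe hwid]⟩
      rw [hCE] at hmem
      exact hp2.2.2.2 hmem.2
    · -- distinct base points: separate via the range map
      obtain ⟨Ux, Vx, hUx, hVx, hxU, hxV, hUVx⟩ := t2_separation hxx
      have hpre : ∀ W : Set X, IsOpen W → IsOpen
          ((Quot.lift (fun p : PGermT S X star D => p.1.2) (fun p q (h : pGermRel S X star D p q) => h.1)) ⁻¹' W) := by
        intro W hW
        refine (xg_isOpen_iff star D hDopen _).mpr ?_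
        intro t'
        have hset : {z : X | ∃ h : z ∈ D (star t'),
            Quot.mk (pGermRel S X star D) ⟨(t', z), h⟩ ∈
              (Quot.lift (fun p : PGermT S X star D => p.1.2) (fun p q (h : pGermRel S X star D p q) => h.1)) ⁻¹' W}
            = D (star t') ∩ W := by
          ext z
          exact ⟨fun ⟨h, hw⟩ => ⟨h, hw⟩, fun ⟨h, hw⟩ => ⟨h, hw⟩⟩
        refine (congrArg IsOpen hset).mpr ?_
        exact (hDopen _).inter hW
      exact ⟨_, _, hpre Ux hUx, hpre Vx hVx, hxU, hxV,
        hUVx.preimage (Quot.lift (fun p : PGermT S X star D => p.1.2) (fun p q (h : pGermRel S X star D p q) => h.1))⟩
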